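/- Let N ≥ 1 be an integer, λ > 0 and 0 < q < 1. Then the relaxed optimal constant coincides with the original one: C^rel_{N,λ,q} = C_{N,λ,q}. -/

import Mathlib

open MeasureTheory ENNReal Filter Topology

noncomputable section

namespace RHLS

abbrev Space (N : ℕ) := EuclideanSpace ℝ (Fin N)

/-- The interaction functional `I_λ[ρ] = ∬ ρ(x) |x-y|^λ ρ(y) dx dy`. -/
def I (N : ℕ) (lam : ℝ) (ρ : Space N → ℝ) : ℝ≥0∞ :=
  ∫⁻ x, ∫⁻ y, ENNReal.ofReal (ρ x) * ENNReal.ofReal (‖x - y‖ ^ lam) *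
    ENNReal.ofReal (ρ y)

/-- `∫ ρ dx`. -/
def mass (N : ℕ) (ρ : Space N → ℝ) : ℝ≥0∞ := ∫⁻ x, ENNReal.ofReal (ρ x)

/-- `∫ ρ^q dx`. -/
def qnorm (N : ℕ) (q : ℝ) (ρ : Space N → ℝ) : ℝ≥0∞ :=
  ∫⁻ x, ENNReal.ofReal (ρ x ^ q)

/-- `∫ |x|^λ ρ(x) dx`. -/
def mom (N : ℕ) (lam : ℝ) (ρ : Space N → ℝ) : ℝ≥0∞ :=
  ∫⁻ x, ENNReal.ofReal (‖x‖ ^ lam * ρ x)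

/-- The exponent `α = (2N - q(2N+λ))/(N(1-q))`. -/
def alpha (N : ℕ) (lam q : ℝ) : ℝ :=
  (2 * (N : ℝ) - q * (2 * (N : ℝ) + lam)) / ((N : ℝ) * (1 - q))

/-- Admissible densities: measurable, nonnegative, in `L¹ ∩ L^q`, not a.e. zero. -/
def Adm (N : ℕ) (q : ℝ) (ρ : Space N → ℝ) : Prop :=
  Measurable ρ ∧ 0 ≤ ρ ∧ mass N ρ < ⊤ ∧ qnorm N q ρ < ⊤ ∧
    ¬ ρ =ᵐ[(volume : Measure (Space N))] (0 : Space N → ℝ)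

/-- The denominator `(∫ρ)^α (∫ρ^q)^{(2-α)/q}`. -/
def denom (N : ℕ) (lam q : ℝ) (ρ : Space N → ℝ) : ℝ≥0∞ :=
  mass N ρ ^ alpha N lam q * qnorm N q ρ ^ ((2 - alpha N lam q) / q)

/-- The quotient whose infimum is `C_{N,λ,q}`. -/
def Qfun (N : ℕ) (lam q : ℝ) (ρ : Space N → ℝ) : ℝ≥0∞ :=
  I N lam ρ / denom N lam q ρ

/-- The optimal constant `C_{N,λ,q}`. -/
def C (N : ℕ) (lam q : ℝ) : ℝ≥0∞ :=
  sInf {c | ∃ ρ, Adm N q ρ ∧ c = Qfun N lam q ρ}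

/-- The relaxed quotient `Q[ρ, M]`. -/
def Qrel (N : ℕ) (lam q : ℝ) (ρ : Space N → ℝ) (M : ℝ) : ℝ≥0∞ :=
  (I N lam ρ + 2 * ENNReal.ofReal M * mom N lam ρ) /
    ((mass N ρ + ENNReal.ofReal M) ^ alpha N lam q *
      qnorm N q ρ ^ ((2 - alpha N lam q) / q))

/-- The relaxed optimal constant `C^rel_{N,λ,q}`. -/
def Crel (N : ℕ) (lam q : ℝ) : ℝ≥0∞ :=
  sInf {c | ∃ ρ M, Adm N q ρ ∧ 0 ≤ M ∧ c = Qrel N lam q ρ M}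

/-- A minimizer `(ρ, M)` for the relaxed problem, with `I_λ[ρ]` and `∫|x|^λ ρ` finite. -/
def IsMinimizerRel (N : ℕ) (lam q : ℝ) (ρ : Space N → ℝ) (M : ℝ) : Prop :=
  Adm N q ρ ∧ 0 ≤ M ∧ I N lam ρ < ⊤ ∧ mom N lam ρ < ⊤ ∧
    Qrel N lam q ρ M = Crel N lam q

/-- `ρ` is radially symmetric non-increasing. -/
def RadialNonincreasing (N : ℕ) (ρ : Space N → ℝ) : Prop :=
  ∃ φ : ℝ → ℝ, (∀ r s : ℝ, 0 ≤ r → r ≤ s → φ s ≤ φ r) ∧ ∀ x, ρ x = φ ‖x‖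

end RHLS

/-!
`C^rel ≤ C` by taking `M = 0`. Conversely, `(ρ, M)` is approximated by
`ρ_ε = ρ + M |B_ε|⁻¹ 1_{B_ε}`. Its mass is `∫ρ + M` and its `∫ρ_ε^q` is at least `∫ρ^q`, so, as
`(2 - α)/q ≥ 0`, the denominator of `Q[ρ_ε]` dominates that of `Q[ρ, M]`. Expanding the quadratic
form `I_λ`, each cross term is at most `M ∫(|x| + ε)^λ ρ` and the self-interaction of the bump at
most `(2ε)^λ M²`; as `ε → 0` this upper bound for `I_λ[ρ_ε]` tends to `I_λ[ρ] + 2M ∫|x|^λ ρ`.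
-/

namespace RHLS

open Metric

lemma alpha_le_two {N : ℕ} {lam q : ℝ} (hlam : 0 ≤ lam) (hq0 : 0 ≤ q) (hq1 : q ≤ 1) :
    alpha N lam q ≤ 2 :=
  div_le_of_le_mul₀ (mul_nonneg N.cast_nonneg (by linarith)) zero_le_two
    (by nlinarith [mul_nonneg hq0 hlam])

/-- Split at `a = √ε`. This bound turns `∫ (|x| + ε)^λ ρ → ∫ |x|^λ ρ` into a limit of
coefficients, with no convergence theorem. -/
lemma add_rpow_le_one_add_sqrt_rpow_mul_add {a ε lam : ℝ} (ha : 0 ≤ a) (hε : 0 ≤ ε)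
    (hlam : 0 ≤ lam) :
    (a + ε) ^ lam ≤ (1 + √ε) ^ lam * a ^ lam + (√ε + ε) ^ lam := by
  rcases le_total a √ε with h | h
  · have : (a + ε) ^ lam ≤ (√ε + ε) ^ lam := by gcongr
    nlinarith [show 0 ≤ (1 + √ε) ^ lam * a ^ lam by positivity]
  · have key : a + ε ≤ (1 + √ε) * a := by
      nlinarith [Real.mul_self_sqrt hε, mul_le_mul_of_nonneg_left h (Real.sqrt_nonneg ε)]
    calc (a + ε) ^ lam ≤ ((1 + √ε) * a) ^ lam := by gcongr
      _ = (1 + √ε) ^ lam * a ^ lam := Real.mul_rpow (by positivity) ha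
      _ ≤ _ := le_add_of_nonneg_right (by positivity)

section Interaction

variable {E : Type*} [NormedAddCommGroup E] {lam ε : ℝ} {F F₁ F₂ G G₁ G₂ : E → ℝ≥0∞}

lemma ofReal_norm_sub_rpow_mul_le (hlam : 0 ≤ lam) (hG : G.support ⊆ ball 0 ε) (x y : E) :
    ENNReal.ofReal (‖x - y‖ ^ lam) * G y ≤ ENNReal.ofReal ((‖x‖ + ε) ^ lam) * G y := by
  by_cases hy : G y = 0
  · simp [hy]
  have hyε : ‖y‖ < ε := mem_ball_zero_iff.1 (hG hy)
  gcongr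
  exact (norm_sub_le x y).trans (by linarith)

variable [MeasurableSpace E] {μ : Measure E}

def interaction (μ : Measure E) (lam : ℝ) (F G : E → ℝ≥0∞) : ℝ≥0∞ :=
  ∫⁻ x, ∫⁻ y, F x * ENNReal.ofReal (‖x - y‖ ^ lam) * G y ∂μ ∂μ

lemma measurable_interaction_integrand [BorelSpace E] [SecondCountableTopology E]
    (hF : Measurable F) (hG : Measurable G) :
    Measurable fun p : E × E => F p.1 * ENNReal.ofReal (‖p.1 - p.2‖ ^ lam) * G p.2 :=
  ((hF.comp measurable_fst).mul
    ((measurable_fst.sub measurable_snd).norm.pow_const lam).ennreal_ofReal).mul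
    (hG.comp measurable_snd)

lemma interaction_add_left [BorelSpace E] [SecondCountableTopology E] [SFinite μ]
    (hF₁ : Measurable F₁) (hG : Measurable G) :
    interaction μ lam (F₁ + F₂) G = interaction μ lam F₁ G + interaction μ lam F₂ G := by
  have h := measurable_interaction_integrand (lam := lam) hF₁ hG
  simp only [interaction, Pi.add_apply, add_mul]
  rw [← lintegral_add_left h.lintegral_prod_right']
  exact lintegral_congr fun x => lintegral_add_left (h.comp measurable_prodMk_left) _

lemma interaction_add_right [BorelSpace E] [SecondCountableTopology E] [SFinite μ]
    (hF : Measurable F) (hG₁ : Measurable G₁) :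
    interaction μ lam F (G₁ + G₂) = interaction μ lam F G₁ + interaction μ lam F G₂ := by
  have h := measurable_interaction_integrand (lam := lam) hF hG₁
  simp only [interaction, Pi.add_apply, mul_add]
  rw [← lintegral_add_left h.lintegral_prod_right']
  exact lintegral_congr fun x => lintegral_add_left (h.comp measurable_prodMk_left) _

lemma interaction_le_of_support_right [OpensMeasurableSpace E] (hF : Measurable F)
    (hG : Measurable G) (hlam : 0 ≤ lam) (hGε : G.support ⊆ ball 0 ε) :
    interaction μ lam F G ≤
      (∫⁻ y, G y ∂μ) * ∫⁻ x, ENNReal.ofReal ((‖x‖ + ε) ^ lam) * F x ∂μ := by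
  have hc : Measurable fun x : E => ENNReal.ofReal ((‖x‖ + ε) ^ lam) :=
    ((measurable_norm.add_const ε).pow_const lam).ennreal_ofReal
  calc interaction μ lam F G
      ≤ ∫⁻ x, ∫⁻ y, ENNReal.ofReal ((‖x‖ + ε) ^ lam) * F x * G y ∂μ ∂μ := by
        refine lintegral_mono fun x => lintegral_mono fun y => ?_
        calc F x * ENNReal.ofReal (‖x - y‖ ^ lam) * G y
            = F x * (ENNReal.ofReal (‖x - y‖ ^ lam) * G y) := mul_assoc _ _ _
          _ ≤ F x * (ENNReal.ofReal ((‖x‖ + ε) ^ lam) * G y) := by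
            gcongr F x * ?_; exact ofReal_norm_sub_rpow_mul_le hlam hGε x y
          _ = _ := by ring
    _ = _ := by
        have hcF : Measurable fun x => ENNReal.ofReal ((‖x‖ + ε) ^ lam) * F x := hc.mul hF
        simp_rw [lintegral_const_mul _ hG]
        rw [lintegral_mul_const _ hcF, mul_comm]

lemma interaction_le_of_support_left [OpensMeasurableSpace E] (hF : Measurable F)
    (hG : Measurable G) (hlam : 0 ≤ lam) (hGε : G.support ⊆ ball 0 ε) :
    interaction μ lam G F ≤
      (∫⁻ x, G x ∂μ) * ∫⁻ y, ENNReal.ofReal ((‖y‖ + ε) ^ lam) * F y ∂μ := by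
  have hc : Measurable fun x : E => ENNReal.ofReal ((‖x‖ + ε) ^ lam) :=
    ((measurable_norm.add_const ε).pow_const lam).ennreal_ofReal
  calc interaction μ lam G F
      ≤ ∫⁻ x, ∫⁻ y, G x * (ENNReal.ofReal ((‖y‖ + ε) ^ lam) * F y) ∂μ ∂μ := by
        refine lintegral_mono fun x => lintegral_mono fun y => ?_
        calc G x * ENNReal.ofReal (‖x - y‖ ^ lam) * F y
            = ENNReal.ofReal (‖y - x‖ ^ lam) * G x * F y := by rw [norm_sub_rev]; ring
          _ ≤ ENNReal.ofReal ((‖y‖ + ε) ^ lam) * G x * F y := by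
            gcongr ?_ * F y; exact ofReal_norm_sub_rpow_mul_le hlam hGε y x
          _ = _ := by ring
    _ = _ := by
        have hcF : Measurable fun x => ENNReal.ofReal ((‖x‖ + ε) ^ lam) * F x := hc.mul hF
        simp_rw [lintegral_const_mul _ hcF]
        rw [lintegral_mul_const _ hG]

lemma interaction_le_of_support (hG : Measurable G) (hlam : 0 ≤ lam)
    (hGε : G.support ⊆ ball 0 ε) :
    interaction μ lam G G ≤ ENNReal.ofReal ((2 * ε) ^ lam) * (∫⁻ x, G x ∂μ) ^ 2 := by
  calc interaction μ lam G G
      ≤ ∫⁻ x, ∫⁻ y, ENNReal.ofReal ((2 * ε) ^ lam) * G x * G y ∂μ ∂μ := by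
        refine lintegral_mono fun x => lintegral_mono fun y => ?_
        by_cases hx : G x = 0
        · simp [hx]
        have hxε : ‖x‖ < ε := mem_ball_zero_iff.1 (hGε hx)
        calc G x * ENNReal.ofReal (‖x - y‖ ^ lam) * G y
            ≤ G x * (ENNReal.ofReal ((‖x‖ + ε) ^ lam) * G y) := by
              rw [mul_assoc]; gcongr G x * ?_; exact ofReal_norm_sub_rpow_mul_le hlam hGε x y
          _ ≤ G x * (ENNReal.ofReal ((2 * ε) ^ lam) * G y) := by
              gcongr
              · linarith [norm_nonneg x]
              · linarith
          _ = _ := by ring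
    _ = _ := by
        simp_rw [lintegral_const_mul _ hG]
        rw [lintegral_mul_const _ (hG.const_mul _), lintegral_const_mul _ hG]
        ring

end Interaction

section Admissible

variable {N : ℕ} {q : ℝ} {ρ : Space N → ℝ}

lemma Adm.mass_ne_zero (h : Adm N q ρ) : mass N ρ ≠ 0 := by
  intro h0
  rw [mass, lintegral_eq_zero_iff h.1.ennreal_ofReal] at h0
  exact h.2.2.2.2 (h0.mono fun x hx => le_antisymm (ENNReal.ofReal_eq_zero.1 hx) (h.2.1 x))

lemma Adm.qnorm_ne_zero (hq : 0 < q) (h : Adm N q ρ) : qnorm N q ρ ≠ 0 := by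
  intro h0
  rw [qnorm, lintegral_eq_zero_iff (h.1.pow_const q).ennreal_ofReal] at h0
  refine h.2.2.2.2 (h0.mono fun x hx => ?_)
  have hx' : ρ x ^ q = 0 :=
    le_antisymm (ENNReal.ofReal_eq_zero.1 hx) (Real.rpow_nonneg (h.2.1 x) q)
  exact (Real.rpow_eq_zero (h.2.1 x) hq.ne').1 hx'

end Admissible

section Bump

variable {N : ℕ} {M ε q lam : ℝ} {ρ : Space N → ℝ}

def bump (N : ℕ) (M ε : ℝ) : Space N → ℝ :=
  (ball (0 : Space N) ε).indicator fun _ => M / volume.real (ball (0 : Space N) ε)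

lemma bump_nonneg (hM : 0 ≤ M) : 0 ≤ bump N M ε :=
  fun _ => Set.indicator_nonneg (fun _ _ => div_nonneg hM measureReal_nonneg) _

lemma measurable_bump : Measurable (bump N M ε) :=
  measurable_const.indicator measurableSet_ball

lemma support_ofReal_bump_subset :
    (fun x => ENNReal.ofReal (bump N M ε x)).support ⊆ ball 0 ε :=
  Function.support_subset_iff'.2 fun x hx => by simp [bump, hx]

lemma lintegral_comp_bump (g : ℝ → ℝ≥0∞) (hg : g 0 = 0) :
    ∫⁻ x, g (bump N M ε x) =
      g (M / volume.real (ball (0 : Space N) ε)) * volume (ball (0 : Space N) ε) := by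
  rw [bump, Set.comp_indicator_const _ g hg, lintegral_indicator_const measurableSet_ball]

lemma lintegral_ofReal_bump (hM : 0 ≤ M) (hε : 0 < ε) :
    ∫⁻ x, ENNReal.ofReal (bump N M ε x) = ENNReal.ofReal M := by
  have hvol : volume.real (ball (0 : Space N) ε) ≠ 0 :=
    (measureReal_ne_zero_iff measure_ball_lt_top.ne).2 (measure_ball_pos _ _ hε).ne'
  rw [lintegral_comp_bump _ ENNReal.ofReal_zero, ← ofReal_measureReal measure_ball_lt_top.ne,
    ← ENNReal.ofReal_mul (div_nonneg hM measureReal_nonneg), div_mul_cancel₀ _ hvol]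

lemma lintegral_ofReal_rpow_bump_lt_top (hq : q ≠ 0) :
    ∫⁻ x, ENNReal.ofReal (bump N M ε x ^ q) < ⊤ := by
  rw [lintegral_comp_bump (fun t => ENNReal.ofReal (t ^ q)) (by simp [Real.zero_rpow hq])]
  exact ENNReal.mul_lt_top ENNReal.ofReal_lt_top measure_ball_lt_top

lemma mass_add_bump (hρ : Measurable ρ) (hρ0 : 0 ≤ ρ) (hM : 0 ≤ M) (hε : 0 < ε) :
    mass N (ρ + bump N M ε) = mass N ρ + ENNReal.ofReal M := by
  simp only [mass, Pi.add_apply, ENNReal.ofReal_add (hρ0 _) (bump_nonneg hM _)]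
  rw [lintegral_add_left hρ.ennreal_ofReal, lintegral_ofReal_bump hM hε]

lemma qnorm_le_qnorm_add_bump (hq : 0 ≤ q) (hρ0 : 0 ≤ ρ) (hM : 0 ≤ M) :
    qnorm N q ρ ≤ qnorm N q (ρ + bump N M ε) :=
  lintegral_mono fun x => ENNReal.ofReal_le_ofReal <|
    Real.rpow_le_rpow (hρ0 x) (le_add_of_nonneg_right (bump_nonneg hM x)) hq

lemma qnorm_add_bump_lt_top (hq0 : 0 < q) (hq1 : q ≤ 1) (hρ : Measurable ρ) (hρ0 : 0 ≤ ρ)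
    (hM : 0 ≤ M) (hρq : qnorm N q ρ < ⊤) : qnorm N q (ρ + bump N M ε) < ⊤ := by
  calc qnorm N q (ρ + bump N M ε)
      ≤ ∫⁻ x, ENNReal.ofReal (ρ x ^ q) + ENNReal.ofReal (bump N M ε x ^ q) := by
        refine lintegral_mono fun x => ?_
        have hb := bump_nonneg hM (ε := ε) x
        rw [← ENNReal.ofReal_add (Real.rpow_nonneg (hρ0 x) q) (Real.rpow_nonneg hb q)]
        exact ENNReal.ofReal_le_ofReal (Real.rpow_add_le_add_rpow (hρ0 x) hb hq0.le hq1)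
    _ = qnorm N q ρ + ∫⁻ x, ENNReal.ofReal (bump N M ε x ^ q) :=
        lintegral_add_left (hρ.pow_const q).ennreal_ofReal _
    _ < ⊤ := ENNReal.add_lt_top.2 ⟨hρq, lintegral_ofReal_rpow_bump_lt_top hq0.ne'⟩

lemma Adm.add_bump (hq0 : 0 < q) (hq1 : q ≤ 1) (h : Adm N q ρ) (hM : 0 ≤ M) (hε : 0 < ε) :
    Adm N q (ρ + bump N M ε) := by
  obtain ⟨hρ, hρ0, hmass, hρq, hne⟩ := h
  refine ⟨hρ.add measurable_bump, fun x => add_nonneg (hρ0 x) (bump_nonneg hM x), ?_,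
    qnorm_add_bump_lt_top hq0 hq1 hρ hρ0 hM hρq, fun h0 => hne ?_⟩
  · rw [mass_add_bump hρ hρ0 hM hε]
    exact ENNReal.add_lt_top.2 ⟨hmass, ENNReal.ofReal_lt_top⟩
  · filter_upwards [h0] with x hx
    have hb : 0 ≤ bump N M ε x := bump_nonneg hM x
    have hρx : 0 ≤ ρ x := hρ0 x
    simp only [Pi.add_apply, Pi.zero_apply] at hx ⊢
    linarith

lemma I_add_bump_le (hlam : 0 ≤ lam) (hρ : Measurable ρ) (hρ0 : 0 ≤ ρ) (hM : 0 ≤ M)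
    (hε : 0 < ε) :
    I N lam (ρ + bump N M ε) ≤ I N lam ρ +
      2 * ENNReal.ofReal M * (∫⁻ x, ENNReal.ofReal ((‖x‖ + ε) ^ lam) * ENNReal.ofReal (ρ x)) +
      ENNReal.ofReal ((2 * ε) ^ lam) * ENNReal.ofReal M ^ 2 := by
  set F : Space N → ℝ≥0∞ := fun x => ENNReal.ofReal (ρ x)
  set G : Space N → ℝ≥0∞ := fun x => ENNReal.ofReal (bump N M ε x)
  have hF : Measurable F := hρ.ennreal_ofReal
  have hG : Measurable G := measurable_bump.ennreal_ofReal
  have hGint : ∫⁻ x, G x = ENNReal.ofReal M := lintegral_ofReal_bump hM hε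
  have hsplit : I N lam (ρ + bump N M ε) = interaction volume lam (F + G) (F + G) := by
    simp only [I, interaction, Pi.add_apply, F, G,
      ENNReal.ofReal_add (hρ0 _) (bump_nonneg hM _)]
  have hFG := interaction_le_of_support_right (μ := volume) hF hG hlam support_ofReal_bump_subset
  have hGF := interaction_le_of_support_left (μ := volume) hF hG hlam support_ofReal_bump_subset
  have hGG := interaction_le_of_support (μ := volume) hG hlam support_ofReal_bump_subset
  set S := ∫⁻ x, ENNReal.ofReal ((‖x‖ + ε) ^ lam) * F x
  rw [hGint] at hFG hGF hGG
  rw [hsplit, show I N lam ρ = interaction volume lam F F from rfl,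
    interaction_add_left hF (hF.add hG), interaction_add_right hF hF,
    interaction_add_right hG hF]
  calc interaction volume lam F F + interaction volume lam F G +
        (interaction volume lam G F + interaction volume lam G G)
      ≤ interaction volume lam F F + ENNReal.ofReal M * S +
        (ENNReal.ofReal M * S + ENNReal.ofReal ((2 * ε) ^ lam) * ENNReal.ofReal M ^ 2) :=
        add_le_add (add_le_add le_rfl hFG) (add_le_add hGF hGG)
    _ = _ := by ring

end Bump

section Relaxation

variable {N : ℕ} {M q lam : ℝ} {ρ : Space N → ℝ}

lemma lintegral_add_rpow_mul_le (hlam : 0 ≤ lam) {ε : ℝ} (hε : 0 ≤ ε) (hρ : Measurable ρ)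
    (hρ0 : 0 ≤ ρ) :
    ∫⁻ x, ENNReal.ofReal ((‖x‖ + ε) ^ lam) * ENNReal.ofReal (ρ x) ≤
      ENNReal.ofReal ((1 + √ε) ^ lam) * mom N lam ρ +
        ENNReal.ofReal ((√ε + ε) ^ lam) * mass N ρ := by
  have hmom : Measurable fun x : Space N => ENNReal.ofReal (‖x‖ ^ lam * ρ x) :=
    ((measurable_norm.pow_const lam).mul hρ).ennreal_ofReal
  calc ∫⁻ x, ENNReal.ofReal ((‖x‖ + ε) ^ lam) * ENNReal.ofReal (ρ x)
      ≤ ∫⁻ x, ENNReal.ofReal ((1 + √ε) ^ lam) * ENNReal.ofReal (‖x‖ ^ lam * ρ x) +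
          ENNReal.ofReal ((√ε + ε) ^ lam) * ENNReal.ofReal (ρ x) := by
        refine lintegral_mono fun x => ?_
        have hρx : 0 ≤ ρ x := hρ0 x
        have hx := add_rpow_le_one_add_sqrt_rpow_mul_add (norm_nonneg x) hε hlam
        rw [← ENNReal.ofReal_mul (by positivity), ← ENNReal.ofReal_mul (by positivity),
          ← ENNReal.ofReal_mul (by positivity),
          ← ENNReal.ofReal_add (by positivity) (by positivity)]
        exact ENNReal.ofReal_le_ofReal (by nlinarith)
    _ = _ := by
        rw [lintegral_add_left (hmom.const_mul _), lintegral_const_mul _ hmom,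
          lintegral_const_mul _ hρ.ennreal_ofReal, mom, mass]

lemma tendsto_ofReal_add_rpow_mul_add (hlam : 0 < lam) {a b : ℝ≥0∞} (hb : b ≠ ⊤) :
    Tendsto (fun ε : ℝ => ENNReal.ofReal ((1 + √ε) ^ lam) * a +
      ENNReal.ofReal ((√ε + ε) ^ lam) * b) (𝓝 0) (𝓝 a) := by
  have hu : Continuous fun ε : ℝ => ENNReal.ofReal ((1 + √ε) ^ lam) :=
    ENNReal.continuous_ofReal.comp
      ((continuous_const.add Real.continuous_sqrt).rpow_const fun _ => Or.inr hlam.le)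
  have hv : Continuous fun ε : ℝ => ENNReal.ofReal ((√ε + ε) ^ lam) :=
    ENNReal.continuous_ofReal.comp
      ((Real.continuous_sqrt.add continuous_id).rpow_const fun _ => Or.inr hlam.le)
  have h := (ENNReal.Tendsto.mul_const (hu.tendsto 0) (b := a) (by simp)).add
    (ENNReal.Tendsto.mul_const (hv.tendsto 0) (b := b) (Or.inr hb))
  simpa [Real.zero_rpow hlam.ne'] using h

lemma tendsto_ofReal_two_mul_rpow (hlam : 0 < lam) :
    Tendsto (fun ε : ℝ => ENNReal.ofReal ((2 * ε) ^ lam)) (𝓝 0) (𝓝 0) := by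
  have h : Continuous fun ε : ℝ => ENNReal.ofReal ((2 * ε) ^ lam) :=
    ENNReal.continuous_ofReal.comp
      ((continuous_const.mul continuous_id).rpow_const fun _ => Or.inr hlam.le)
  simpa [Real.zero_rpow hlam.ne'] using h.tendsto 0

def numeratorBound (N : ℕ) (lam : ℝ) (ρ : Space N → ℝ) (M ε : ℝ) : ℝ≥0∞ :=
  I N lam ρ + 2 * ENNReal.ofReal M * (ENNReal.ofReal ((1 + √ε) ^ lam) * mom N lam ρ +
    ENNReal.ofReal ((√ε + ε) ^ lam) * mass N ρ) +
  ENNReal.ofReal ((2 * ε) ^ lam) * ENNReal.ofReal M ^ 2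

lemma I_add_bump_le_numeratorBound (hlam : 0 ≤ lam) (hρ : Measurable ρ) (hρ0 : 0 ≤ ρ)
    (hM : 0 ≤ M) {ε : ℝ} (hε : 0 < ε) :
    I N lam (ρ + bump N M ε) ≤ numeratorBound N lam ρ M ε := by
  refine (I_add_bump_le hlam hρ hρ0 hM hε).trans ?_
  unfold numeratorBound
  gcongr
  exact lintegral_add_rpow_mul_le hlam hε.le hρ hρ0

lemma tendsto_numeratorBound (hlam : 0 < lam) (hmass : mass N ρ ≠ ⊤) :
    Tendsto (numeratorBound N lam ρ M) (𝓝 0)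
      (𝓝 (I N lam ρ + 2 * ENNReal.ofReal M * mom N lam ρ)) := by
  have h : Tendsto (numeratorBound N lam ρ M) (𝓝 0)
      (𝓝 (I N lam ρ + 2 * ENNReal.ofReal M * mom N lam ρ + 0 * ENNReal.ofReal M ^ 2)) :=
    (tendsto_const_nhds.add (ENNReal.Tendsto.const_mul
      (tendsto_ofReal_add_rpow_mul_add hlam hmass) (Or.inr (by finiteness)))).add
    (ENNReal.Tendsto.mul_const (tendsto_ofReal_two_mul_rpow hlam) (Or.inr (by finiteness)))
  rwa [zero_mul, add_zero] at h

lemma Qrel_zero (lam q : ℝ) (ρ : Space N → ℝ) : Qrel N lam q ρ 0 = Qfun N lam q ρ := by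
  simp [Qrel, Qfun, denom]

lemma C_le_Qrel (hlam : 0 < lam) (hq0 : 0 < q) (hq1 : q < 1) (h : Adm N q ρ) (hM : 0 ≤ M) :
    C N lam q ≤ Qrel N lam q ρ M := by
  have ⟨hρ, hρ0, hmass, hρq, _⟩ := h
  set D := (mass N ρ + ENNReal.ofReal M) ^ alpha N lam q *
    qnorm N q ρ ^ ((2 - alpha N lam q) / q)
  have hβ : 0 ≤ (2 - alpha N lam q) / q :=
    div_nonneg (sub_nonneg.2 (alpha_le_two hlam.le hq0.le hq1.le)) hq0.le
  have hD : D ≠ 0 := by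
    have h1 : mass N ρ + ENNReal.ofReal M ≠ 0 := by simp [h.mass_ne_zero]
    have h2 : mass N ρ + ENNReal.ofReal M ≠ ⊤ := by simp [hmass.ne]
    exact mul_ne_zero (ENNReal.rpow_pos (pos_iff_ne_zero.2 h1) h2).ne'
      (ENNReal.rpow_pos (pos_iff_ne_zero.2 (h.qnorm_ne_zero hq0)) hρq.ne).ne'
  have hC : ∀ ε > 0, C N lam q ≤ numeratorBound N lam ρ M ε / D := fun ε hε =>
    calc C N lam q ≤ Qfun N lam q (ρ + bump N M ε) :=
          sInf_le ⟨_, h.add_bump hq0 hq1.le hM hε, rfl⟩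
      _ ≤ numeratorBound N lam ρ M ε / D := by
        refine ENNReal.div_le_div (I_add_bump_le_numeratorBound hlam.le hρ hρ0 hM hε) ?_
        rw [denom, mass_add_bump hρ hρ0 hM hε]
        simp only [D]
        gcongr
        exact qnorm_le_qnorm_add_bump hq0.le hρ0 hM
  have hlim : Tendsto (fun ε => numeratorBound N lam ρ M ε / D) (𝓝[>] 0)
      (𝓝 (Qrel N lam q ρ M)) :=
    (ENNReal.Tendsto.div_const (tendsto_numeratorBound hlam hmass.ne) (Or.inr hD)).mono_left
      nhdsWithin_le_nhds
  exact ge_of_tendsto hlim (eventually_nhdsWithin_of_forall hC)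

end Relaxation

end RHLS

theorem stmt7_general (N : ℕ) (lam q : ℝ) (hlam : 0 < lam)
    (hq0 : 0 < q) (hq1 : q < 1) :
    RHLS.Crel N lam q = RHLS.C N lam q := by
  apply le_antisymm
  · apply sInf_le_sInf
    rintro c ⟨ρ, hAdm, rfl⟩
    exact ⟨ρ, 0, hAdm, le_rfl, (RHLS.Qrel_zero lam q ρ).symm⟩
  · apply le_sInf
    rintro c ⟨ρ, M, hAdm, hM, rfl⟩
    exact RHLS.C_le_Qrel hlam hq0 hq1 hAdm hM

/-- the relaxed optimal constant coincides with the original one. -/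
theorem stmt7 (N : ℕ) (hN : 1 ≤ N) (lam q : ℝ) (hlam : 0 < lam)
    (hq0 : 0 < q) (hq1 : q < 1) :
    RHLS.Crel N lam q = RHLS.C N lam q :=
  stmt7_general N lam q hlam hq0 hq1
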